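/- Fix k > 0 and let ω_1 = (α, β, γ) and ω_2 = (α', β', γ') be elements of Ω. If Ψ(ω_1; z) = Ψ(ω_2; z) for all z in some open neighborhood of 0 in ℂ, then ω_1 = ω_2, i.e. α_i = α'_i for all i, β = β' and γ = γ'. -/

import Mathlib

/-!
Near `0`, `Ψ(ω; z) = exp (k L_ω(z))` with `L_ω(z) = βz + γz²/2 + ∑ₗ (-αₗ z - log (1 - αₗ z))`,
a power series with coefficients `β`, `(γ + p₂)/2` and `pₙ/n` for `n ≥ 3`, where `pₙ = ∑ₗ αₗⁿ`.
Since `L_ω(0) = 0` and `exp` is injective near `0`, equal `Ψ`'s have equal `L`'s, hence equal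
coefficients. The power sums `pₙ`, `n ≥ 3`, determine a `≪`-decreasing sequence: for
`|t| = |α₀|`, `p_{2n+3}/t^{2n+3} + p_{2n+4}/t^{2n+4}` tends to twice the number of indices with
`αⱼ = t`, which pins down `α₀`; removing `α₀` and repeating recovers the whole sequence.
-/

open Filter Topology

/-- The order `x ≪ y` : `|x| < |y|`, or `|x| = |y|` and `x ≤ y`. -/
def VKle (x y : ℝ) : Prop := |x| < |y| ∨ (|x| = |y| ∧ x ≤ y)

/-- The function `Ψ(ω;z) = e^{kβz + kγz²/2} ∏_{l=1}^∞ e^{-kα_l z}(1-α_l z)^{-k}`. -/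
noncomputable def Psi (k : ℝ) (α : ℕ → ℝ) (β γ : ℝ) (z : ℂ) : ℂ :=
  Complex.exp ((k : ℂ) * (β : ℂ) * z + (k : ℂ) * (γ : ℂ) * z ^ 2 / 2) *
    ∏' l : ℕ, Complex.exp (-((k : ℂ) * (α l : ℂ) * z)) * (1 - (α l : ℂ) * z) ^ (-(k : ℂ))

namespace VKle

variable {x y z : ℝ}

lemma abs_le (h : VKle x y) : |x| ≤ |y| :=
  Or.elim h le_of_lt fun h => h.1.le

lemma le_of_abs_le (h : VKle x y) (h' : |y| ≤ |x|) : x ≤ y :=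
  Or.elim h (fun h => absurd h' (not_le.2 h)) And.right

lemma trans (h₁ : VKle x y) (h₂ : VKle y z) : VKle x z := by
  rcases h₁ with h₁ | ⟨h₁, h₁'⟩ <;> rcases h₂ with h₂ | ⟨h₂, h₂'⟩
  · exact Or.inl (h₁.trans h₂)
  · exact Or.inl (h₁.trans_eq h₂)
  · exact Or.inl (h₁.trans_lt h₂)
  · exact Or.inr ⟨h₁.trans h₂, h₁'.trans h₂'⟩

end VKle

section PowerSums

variable {b b' : ℕ → ℝ}

lemma vkle_head (hd : ∀ i, VKle (b (i + 1)) (b i)) (j : ℕ) : VKle (b j) (b 0) := by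
  induction j with
  | zero => exact Or.inr ⟨rfl, le_rfl⟩
  | succ j ih => exact (hd j).trans ih

lemma abs_le_abs_head (hd : ∀ i, VKle (b (i + 1)) (b i)) (j : ℕ) : |b j| ≤ |b 0| :=
  (vkle_head hd j).abs_le

lemma le_head_of_abs_head_le (hd : ∀ i, VKle (b (i + 1)) (b i)) {j : ℕ} (h : |b 0| ≤ |b j|) :
    b j ≤ b 0 :=
  (vkle_head hd j).le_of_abs_le h

lemma summable_pow_of_summable_sq (hs : Summable fun j => b j ^ 2) {m : ℕ} (hm : 2 ≤ m) :
    Summable fun j => b j ^ m := by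
  refine Summable.of_norm_bounded_eventually hs ?_
  filter_upwards [hs.tendsto_cofinite_zero.eventually (ge_mem_nhds one_pos)] with j hj
  rw [Real.norm_eq_abs, abs_pow, ← sq_abs (b j)]
  exact pow_le_pow_of_le_one (abs_nonneg _) ((sq_le_one_iff_abs_le_one _).1 hj) hm

lemma tendsto_tsum_pow_div_add (hs : Summable fun j => b j ^ 2) {t : ℝ} (ht : t ≠ 0)
    (hb : ∀ j, |b j| ≤ |t|) :
    Tendsto (fun n : ℕ => (∑' j, b j ^ (2 * n + 3)) / t ^ (2 * n + 3) +
        (∑' j, b j ^ (2 * n + 4)) / t ^ (2 * n + 4)) atTop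
      (𝓝 (∑' j, if b j = t then 2 else 0)) := by
  set x : ℕ → ℝ := fun j => b j / t
  have hx : ∀ j, |x j| ≤ 1 := fun j => by
    rw [abs_div, div_le_one (abs_pos.2 ht)]
    exact hb j
  have hterm : ∀ n : ℕ, (∑' j, b j ^ (2 * n + 3)) / t ^ (2 * n + 3) +
      (∑' j, b j ^ (2 * n + 4)) / t ^ (2 * n + 4) =
        ∑' j, (x j ^ 2) ^ n * (x j ^ 3 * (1 + x j)) := by
    intro n
    rw [← tsum_div_const, ← tsum_div_const, ← Summable.tsum_add
      ((summable_pow_of_summable_sq hs (by omega)).div_const _)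
      ((summable_pow_of_summable_sq hs (by omega)).div_const _)]
    congr 1 with j
    simp only [x, div_pow]
    ring
  simp_rw [hterm]
  refine tendsto_tsum_of_dominated_convergence (bound := fun j => 2 * x j ^ 2)
    ((hs.div_const (t ^ 2)).mul_left 2 |>.congr fun j => by simp [x, div_pow]) (fun j => ?_)
    (Eventually.of_forall fun n j => ?_)
  · rcases (hx j).lt_or_eq with hlt | heq
    · have hsq : x j ^ 2 < 1 := (sq_lt_one_iff_abs_lt_one _).2 hlt
      have hne : b j ≠ t := fun h => by simp [x, h, ht] at hlt
      simpa [hne] using (tendsto_pow_atTop_nhds_zero_of_lt_one (sq_nonneg _) hsq).mul_const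
        (x j ^ 3 * (1 + x j))
    · have hsq : x j ^ 2 = 1 := by rw [← sq_abs, heq, one_pow]
      have hval : x j ^ 3 * (1 + x j) = if b j = t then 2 else 0 := by
        rcases abs_eq (zero_le_one' ℝ) |>.1 heq with h | h
        · have : b j = t := by simpa [x, div_eq_one_iff_eq ht] using h
          norm_num [this, h]
        · have : b j ≠ t := fun h' => by simp [x, h', ht] at h; norm_num at h
          simp [this, h]
      simp [hsq, hval]
  · rw [Real.norm_eq_abs, abs_mul, abs_pow, abs_of_nonneg (sq_nonneg _), abs_mul, abs_pow]
    calc (x j ^ 2) ^ n * (|x j| ^ 3 * |1 + x j|) ≤ 1 * (x j ^ 2 * 2) := by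
          gcongr
          · exact pow_le_one₀ (sq_nonneg _) ((sq_le_one_iff_abs_le_one _).2 (hx j))
          · rw [pow_succ, sq_abs]
            exact mul_le_of_le_one_right (sq_nonneg _) (hx j)
          · exact (abs_add_le _ _).trans (by rw [abs_one]; linarith [hx j])
      _ = 2 * x j ^ 2 := by ring

lemma exists_eq_iff_tsum_ite_pos (hs : Summable fun j => b j ^ 2) {t : ℝ} (ht : t ≠ 0) :
    (∃ j, b j = t) ↔ 0 < ∑' j, if b j = t then (2 : ℝ) else 0 := by
  have hsum : Summable fun j => if b j = t then (2 : ℝ) else 0 := by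
    refine Summable.of_nonneg_of_le (fun j => by positivity) (fun j => ?_)
      (hs.mul_left (2 / t ^ 2))
    split_ifs with h
    · rw [h, div_mul_cancel₀ _ (pow_ne_zero 2 ht)]
    · positivity
  constructor
  · rintro ⟨j, hj⟩
    exact hsum.tsum_pos (fun j => by positivity) j (by simp [hj])
  · intro hpos
    by_contra! hne
    simp [hne] at hpos

lemma exists_eq_iff_of_tsum_pow_eq (hs : Summable fun j => b j ^ 2)
    (hs' : Summable fun j => b' j ^ 2) {t : ℝ} (ht : t ≠ 0) (hb : ∀ j, |b j| ≤ |t|)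
    (hb' : ∀ j, |b' j| ≤ |t|) (hp : ∀ m, 3 ≤ m → ∑' j, b j ^ m = ∑' j, b' j ^ m) :
    (∃ j, b j = t) ↔ ∃ j, b' j = t := by
  have hlim := tendsto_nhds_unique (tendsto_tsum_pow_div_add hs ht hb)
    ((tendsto_tsum_pow_div_add hs' ht hb').congr fun n => by rw [hp, hp] <;> omega)
  rw [exists_eq_iff_tsum_ite_pos hs ht, exists_eq_iff_tsum_ite_pos hs' ht, hlim]

lemma head_eq_of_exists_iff (hd : ∀ i, VKle (b (i + 1)) (b i))
    (hd' : ∀ i, VKle (b' (i + 1)) (b' i)) (hb' : |b' 0| ≤ |b 0|)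
    (h : ∀ t, |t| = |b 0| → ((∃ j, b j = t) ↔ ∃ j, b' j = t)) :
    b 0 = b' 0 := by
  by_cases hmax : ∃ j, b j = |b 0|
  · obtain ⟨j, hj⟩ := hmax
    obtain ⟨j', hj'⟩ := (h _ (abs_abs _)).1 ⟨j, hj⟩
    have h0 := le_head_of_abs_head_le hd (j := j) (by rw [hj, abs_abs])
    have h0' := le_head_of_abs_head_le hd' (j := j') (by rw [hj', abs_abs]; exact hb')
    linarith [le_abs_self (b 0), le_abs_self (b' 0)]
  · have hneg : |b 0| = -b 0 := (abs_choice (b 0)).resolve_left fun h' => hmax ⟨0, h'.symm⟩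
    obtain ⟨j', hj'⟩ := (h (b 0) rfl).1 ⟨0, rfl⟩
    have habs : |b' 0| = |b 0| := hb'.antisymm (hj' ▸ abs_le_abs_head hd' j')
    have hne : b' 0 ≠ |b 0| := fun h' => hmax ((h _ (abs_abs _)).2 ⟨0, h'⟩)
    rcases abs_choice (b' 0) with h' | h'
    · exact absurd (habs ▸ h'.symm) hne
    · linarith

lemma head_eq_of_tsum_pow_eq (hd : ∀ i, VKle (b (i + 1)) (b i))
    (hd' : ∀ i, VKle (b' (i + 1)) (b' i)) (hs : Summable fun j => b j ^ 2)
    (hs' : Summable fun j => b' j ^ 2) (hp : ∀ m, 3 ≤ m → ∑' j, b j ^ m = ∑' j, b' j ^ m) :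
    b 0 = b' 0 := by
  wlog hb' : |b' 0| ≤ |b 0| generalizing b b'
  · exact (this hd' hd hs' hs (fun m hm => (hp m hm).symm) (le_of_not_ge hb')).symm
  rcases eq_or_ne (b 0) 0 with h0 | h0
  · rw [h0, abs_zero, abs_nonpos_iff] at hb'
    rw [h0, hb']
  refine head_eq_of_exists_iff hd hd' hb' fun t ht => ?_
  refine exists_eq_iff_of_tsum_pow_eq hs hs' (abs_pos.1 (ht ▸ abs_pos.2 h0)) (fun j => ?_)
    (fun j => ?_) hp
  · exact ht ▸ abs_le_abs_head hd j
  · exact ht ▸ (abs_le_abs_head hd' j).trans hb'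

theorem eq_of_tsum_pow_eq (hd : ∀ i, VKle (b (i + 1)) (b i))
    (hd' : ∀ i, VKle (b' (i + 1)) (b' i)) (hs : Summable fun j => b j ^ 2)
    (hs' : Summable fun j => b' j ^ 2) (hp : ∀ m, 3 ≤ m → ∑' j, b j ^ m = ∑' j, b' j ^ m)
    (i : ℕ) : b i = b' i := by
  induction i generalizing b b' with
  | zero => exact head_eq_of_tsum_pow_eq hd hd' hs hs' hp
  | succ i ih =>
    have h0 := head_eq_of_tsum_pow_eq hd hd' hs hs' hp
    refine ih (b := fun j => b (j + 1)) (b' := fun j => b' (j + 1)) (fun j => hd (j + 1))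
      (fun j => hd' (j + 1)) ((summable_nat_add_iff 1).2 hs) ((summable_nat_add_iff 1).2 hs')
      fun m hm => ?_
    have h := hp m hm
    rwa [(summable_pow_of_summable_sq hs (by omega)).tsum_eq_zero_add,
      (summable_pow_of_summable_sq hs' (by omega)).tsum_eq_zero_add, h0, add_right_inj] at h

end PowerSums

section LogPsi

open Complex FormalMultilinearSeries

lemma hasFPowerSeriesAt_ofScalars_of_eventually_hasSum {c : ℕ → ℂ} {f : ℂ → ℂ}
    (h : ∀ᶠ z in 𝓝 0, HasSum (fun n => c n * z ^ n) (f z)) :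
    HasFPowerSeriesAt f (ofScalars ℂ c) 0 := by
  obtain ⟨ε, hε, hball⟩ := Metric.eventually_nhds_iff.1 h
  obtain ⟨r, hr0, hrε⟩ := exists_between hε
  lift r to NNReal using hr0.le
  have hsum : ∀ y : ℂ, ‖y‖ < r → HasSum (fun n => c n * y ^ n) (f y) := fun y hy =>
    hball (by simpa using hy.trans hrε)
  refine ⟨r, ⟨?_, by simpa using hr0, fun {y} hy => ?_⟩⟩
  · refine (ofScalars ℂ c).le_radius_of_tendsto (l := 0) ?_
    have := (hball (y := (r : ℂ)) (by simpa using hrε)).summable.tendsto_atTop_zero.norm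
    simpa [ofScalars_norm] using this
  · rw [Metric.mem_eball, edist_zero_right, ← ofReal_norm, ← ENNReal.ofReal_coe_nnreal,
      ENNReal.ofReal_lt_ofReal_iff_of_nonneg (norm_nonneg _)] at hy
    simpa [ofScalars_apply_eq, mul_comm] using hsum y hy

noncomputable def logPsi (α : ℕ → ℝ) (β γ : ℝ) (z : ℂ) : ℂ :=
  β * z + γ * z ^ 2 / 2 + ∑' l, (-(α l * z) - log (1 - α l * z))

noncomputable def logPsiCoeff (α : ℕ → ℝ) (β γ : ℝ) (n : ℕ) : ℂ :=
  (if n = 1 then β else 0) + (if n = 2 then γ / 2 else 0) +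
    if 2 ≤ n then ((∑' l, α l ^ n : ℝ) : ℂ) / n else 0

lemma hasSum_neg_sub_log_one_sub {w : ℂ} (hw : ‖w‖ < 1) :
    HasSum (fun n : ℕ => if 2 ≤ n then w ^ n / n else 0) (-w - log (1 - w)) := by
  rw [show -w - log (1 - w) = -log (1 - w) - w by ring]
  -- the `n = 0` term `w ^ 0 / 0` of the Taylor series is `0` by the convention `x / 0 = 0`
  refine ((hasSum_taylorSeries_neg_log hw).sub (hasSum_ite_eq 1 w)).congr_fun fun n => ?_
  rcases n with _ | _ | n <;> simp

lemma norm_ite_pow_div_le {w : ℂ} (hw : ‖w‖ ≤ 1 / 2) (n : ℕ) :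
    ‖if 2 ≤ n then w ^ n / n else 0‖ ≤ 4 * ‖w‖ ^ 2 * (1 / 2) ^ n := by
  split_ifs with hn
  · obtain ⟨m, rfl⟩ := Nat.exists_eq_add_of_le' hn
    rw [norm_div, norm_pow, Complex.norm_natCast]
    calc ‖w‖ ^ (m + 2) / ((m + 2 : ℕ) : ℝ) ≤ ‖w‖ ^ (m + 2) :=
          div_le_self (by positivity) (by norm_cast; omega)
      _ = ‖w‖ ^ 2 * ‖w‖ ^ m := by ring
      _ ≤ ‖w‖ ^ 2 * (1 / 2) ^ m := by gcongr
      _ = 4 * ‖w‖ ^ 2 * (1 / 2) ^ (m + 2) := by ring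
  · rw [norm_zero]
    positivity

variable {α : ℕ → ℝ} {β γ : ℝ} {z : ℂ}

lemma summable_logPsi_double (hs : Summable fun l => α l ^ 2)
    (hz : ∀ l, ‖(α l : ℂ) * z‖ ≤ 1 / 2) :
    Summable fun p : ℕ × ℕ => if 2 ≤ p.2 then ((α p.1 : ℂ) * z) ^ p.2 / p.2 else 0 := by
  refine Summable.of_norm_bounded (Summable.mul_of_nonneg (hs.mul_left (4 * ‖z‖ ^ 2))
    summable_geometric_two (fun l => by positivity) (fun n => by positivity)) fun p => ?_
  refine (norm_ite_pow_div_le (hz p.1) p.2).trans_eq ?_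
  rw [norm_mul, norm_real, Real.norm_eq_abs, mul_pow, sq_abs]
  ring

lemma summable_neg_sub_log (hs : Summable fun l => α l ^ 2)
    (hz : ∀ l, ‖(α l : ℂ) * z‖ ≤ 1 / 2) :
    Summable fun l => -(α l * z) - log (1 - α l * z) :=
  (summable_logPsi_double hs hz).prod.congr fun l =>
    (hasSum_neg_sub_log_one_sub ((hz l).trans_lt (by norm_num))).tsum_eq

lemma hasSum_logPsiCoeff (hs : Summable fun l => α l ^ 2)
    (hz : ∀ l, ‖(α l : ℂ) * z‖ ≤ 1 / 2) :
    HasSum (fun n => logPsiCoeff α β γ n * z ^ n) (logPsi α β γ z) := by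
  have hF := summable_logPsi_double hs hz
  have hrows := hF.hasSum.prod_fiberwise fun l =>
    hasSum_neg_sub_log_one_sub (w := α l * z) ((hz l).trans_lt (by norm_num))
  have hcol (n : ℕ) : HasSum (fun l => if 2 ≤ n then ((α l : ℂ) * z) ^ n / n else 0)
      (if 2 ≤ n then ((∑' l, α l ^ n : ℝ) : ℂ) * (z ^ n / n) else 0) := by
    by_cases hn : 2 ≤ n
    · simp only [hn, if_true]
      exact ((hasSum_ofReal.2 (summable_pow_of_summable_sq hs hn).hasSum).mul_right
        (z ^ n / n)).congr_fun fun l => by push_cast; ring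
    · simp only [hn, if_false]
      exact hasSum_zero
  have hcols := ((Equiv.prodComm ℕ ℕ).hasSum_iff.2 hF.hasSum).prod_fiberwise hcol
  rw [← hrows.tsum_eq] at hcols
  refine (((hasSum_ite_eq 1 ((β : ℂ) * z)).add (hasSum_ite_eq 2 ((γ : ℂ) * z ^ 2 / 2))).add
    hcols).congr_fun fun n => ?_
  simp only [logPsiCoeff]
  split_ifs <;> first | omega | (subst_vars; push_cast; ring)

@[simp]
lemma logPsi_zero : logPsi α β γ 0 = 0 := by
  simp [logPsi]

lemma cexp_neg_mul_mul_one_sub_cpow {w : ℂ} (hw : w ≠ 1) (k : ℂ) :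
    exp (-(k * w)) * (1 - w) ^ (-k) = exp (k * (-w - log (1 - w))) := by
  rw [cpow_def_of_ne_zero (sub_ne_zero.2 hw.symm), ← exp_add]
  ring_nf

lemma psi_eq_exp_logPsi (k : ℝ) (hs : Summable fun l => α l ^ 2)
    (hz : ∀ l, ‖(α l : ℂ) * z‖ ≤ 1 / 2) :
    Psi k α β γ z = exp (k * logPsi α β γ z) := by
  have hne : ∀ l, (α l : ℂ) * z ≠ 1 := fun l h => by
    have := hz l
    rw [h, norm_one] at this
    norm_num at this
  have hprod := ((summable_neg_sub_log hs hz).hasSum.mul_left (k : ℂ)).cexp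
  rw [Psi, tprod_congr fun l => by rw [mul_assoc, cexp_neg_mul_mul_one_sub_cpow (hne l)],
    ← Function.comp_def exp, hprod.tprod_eq, ← exp_add, logPsi]
  ring_nf

lemma eventually_norm_mul_le (hs : Summable fun l => α l ^ 2) :
    ∀ᶠ z in 𝓝 (0 : ℂ), ∀ l, ‖(α l : ℂ) * z‖ ≤ 1 / 2 := by
  set B := √(∑' l, α l ^ 2) + 1
  have hB0 : 0 < B := by positivity
  have hB : ∀ l, |α l| ≤ B := fun l => by
    rw [← Real.sqrt_sq_eq_abs]
    have := Real.sqrt_le_sqrt (hs.le_tsum l fun j _ => sq_nonneg (α j))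
    linarith
  filter_upwards [Metric.ball_mem_nhds (0 : ℂ) (show 0 < 1 / (2 * B) by positivity)] with z hz l
  rw [mem_ball_zero_iff] at hz
  rw [norm_mul, norm_real, Real.norm_eq_abs]
  calc |α l| * ‖z‖ ≤ B * (1 / (2 * B)) := mul_le_mul (hB l) hz.le (norm_nonneg _) hB0.le
    _ = 1 / 2 := by field_simp

lemma hasFPowerSeriesAt_logPsi (hs : Summable fun l => α l ^ 2) :
    HasFPowerSeriesAt (logPsi α β γ) (ofScalars ℂ (logPsiCoeff α β γ)) 0 :=
  hasFPowerSeriesAt_ofScalars_of_eventually_hasSum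
    ((eventually_norm_mul_le hs).mono fun _ hz => hasSum_logPsiCoeff hs hz)

lemma eventuallyEq_of_cexp_eventuallyEq {X : Type*} {l : Filter X} {f g : X → ℂ}
    (hfg : Tendsto (fun x => f x - g x) l (𝓝 0)) (h : ∀ᶠ x in l, exp (f x) = exp (g x)) :
    f =ᶠ[l] g := by
  filter_upwards [hfg.eventually (Metric.ball_mem_nhds 0 Real.pi_pos), h] with x hx hexp
  rw [dist_zero_right] at hx
  have him : |(f x - g x).im| < Real.pi := (abs_im_le_norm _).trans_lt hx
  have := exp_inj_of_neg_pi_lt_of_le_pi (y := 0) (neg_lt_of_abs_lt him) (le_of_abs_le him.le)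
    (by simpa using Real.pi_pos) (by simpa using Real.pi_pos.le)
    (by rw [exp_sub, hexp, div_self (exp_ne_zero _), exp_zero])
  exact sub_eq_zero.1 this

lemma logPsi_eventuallyEq_of_psi_eventuallyEq {α' : ℕ → ℝ} {β' γ' k : ℝ} (hk : k ≠ 0)
    (hs : Summable fun l => α l ^ 2) (hs' : Summable fun l => α' l ^ 2)
    (h : Psi k α β γ =ᶠ[𝓝 0] Psi k α' β' γ') :
    logPsi α β γ =ᶠ[𝓝 0] logPsi α' β' γ' := by
  have hexp : ∀ᶠ z in 𝓝 (0 : ℂ), exp (k * logPsi α β γ z) = exp (k * logPsi α' β' γ' z) := by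
    filter_upwards [h, eventually_norm_mul_le hs, eventually_norm_mul_le hs'] with z hz hα hα'
    rw [← psi_eq_exp_logPsi k hs hα, ← psi_eq_exp_logPsi k hs' hα', hz]
  have hcont : Tendsto (fun z => k * logPsi α β γ z - k * logPsi α' β' γ' z) (𝓝 0) (𝓝 0) := by
    have : ContinuousAt (fun z => k * logPsi α β γ z - k * logPsi α' β' γ' z) 0 :=
      (continuousAt_const.mul (hasFPowerSeriesAt_logPsi hs).continuousAt).sub
        (continuousAt_const.mul (hasFPowerSeriesAt_logPsi hs').continuousAt)
    simpa using this.tendsto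
  filter_upwards [eventuallyEq_of_cexp_eventuallyEq hcont hexp] with z hz
  exact mul_left_cancel₀ (ofReal_ne_zero.2 hk) hz

lemma logPsiCoeff_one : logPsiCoeff α β γ 1 = β := by
  simp [logPsiCoeff]

lemma logPsiCoeff_two : logPsiCoeff α β γ 2 = (γ + ∑' l, α l ^ 2 : ℝ) / 2 := by
  simp [logPsiCoeff]
  ring

lemma logPsiCoeff_of_three_le {n : ℕ} (hn : 3 ≤ n) :
    logPsiCoeff α β γ n = (∑' l, α l ^ n : ℝ) / n := by
  simp [logPsiCoeff, show n ≠ 1 by omega, show n ≠ 2 by omega, show 2 ≤ n by omega]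

end LogPsi

theorem psi_injective_general (k : ℝ) (hk : 0 < k)
    (α α' : ℕ → ℝ) (β β' γ γ' : ℝ)
    (hdec : ∀ i, VKle (α (i + 1)) (α i)) (hdec' : ∀ i, VKle (α' (i + 1)) (α' i))
    (hsum : Summable fun i => (α i) ^ 2) (hsum' : Summable fun i => (α' i) ^ 2)
    (U : Set ℂ) (hU : U ∈ 𝓝 (0 : ℂ))
    (heq : ∀ z ∈ U, Psi k α β γ z = Psi k α' β' γ' z) :
    (∀ i, α i = α' i) ∧ β = β' ∧ γ = γ' := by
  have hL := logPsi_eventuallyEq_of_psi_eventuallyEq hk.ne' hsum hsum'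
    (eventually_of_mem hU heq)
  have hc : logPsiCoeff α β γ = logPsiCoeff α' β' γ' :=
    FormalMultilinearSeries.ofScalars_series_injective ℂ ℂ
      ((hasFPowerSeriesAt_logPsi hsum).eq_formalMultilinearSeries
        ((hasFPowerSeriesAt_logPsi hsum').congr hL.symm))
  have hα : ∀ i, α i = α' i := eq_of_tsum_pow_eq hdec hdec' hsum hsum' fun m hm => by
    have := congr_fun hc m
    rw [logPsiCoeff_of_three_le hm, logPsiCoeff_of_three_le hm] at this
    exact_mod_cast (div_left_inj' (Nat.cast_ne_zero.2 (by omega))).1 this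
  obtain rfl : α = α' := funext hα
  have h1 := congr_fun hc 1
  have h2 := congr_fun hc 2
  rw [logPsiCoeff_one, logPsiCoeff_one] at h1
  rw [logPsiCoeff_two, logPsiCoeff_two] at h2
  have h2' : (γ + ∑' l, α l ^ 2) / 2 = (γ' + ∑' l, α l ^ 2) / 2 := by exact_mod_cast h2
  exact ⟨hα, by exact_mod_cast h1, by linarith⟩

/-- For `ω₁, ω₂ ∈ Ω`, if `Ψ(ω₁;·) = Ψ(ω₂;·)` on a neighborhood of `0`,
then `ω₁ = ω₂`. -/
theorem psi_injective (k : ℝ) (hk : 0 < k)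
    (α α' : ℕ → ℝ) (β β' γ γ' : ℝ)
    (hdec : ∀ i, VKle (α (i + 1)) (α i)) (hdec' : ∀ i, VKle (α' (i + 1)) (α' i))
    (hsum : Summable fun i => (α i) ^ 2) (hsum' : Summable fun i => (α' i) ^ 2)
    (hγ : 0 ≤ γ) (hγ' : 0 ≤ γ')
    (U : Set ℂ) (hU : U ∈ 𝓝 (0 : ℂ))
    (heq : ∀ z ∈ U, Psi k α β γ z = Psi k α' β' γ' z) :
    (∀ i, α i = α' i) ∧ β = β' ∧ γ = γ' :=
  psi_injective_general k hk α α' β β' γ γ' hdec hdec' hsum hsum' U hU heq
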